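/- With the same series representation of the cone heat kernel, for fixed x, y, w, z in V one has p^V(t,x,y)/p^V(t,w,z) → v(x)v(y)/(v(w)v(z)) as t → ∞, where v(rθ) = r^{α¹-(n/2-1)} m¹(θ). -/

import Mathlib

open Filter

/-- The modified Bessel function of the first kind of order `ν`. -/
noncomputable def besselI (ν z : ℝ) : ℝ :=
  ∑' k : ℕ, (z / 2) ^ (ν + 2 * (k : ℝ)) / ((Nat.factorial k : ℝ) * Real.Gamma (ν + k + 1))

/-- The Dirichlet heat kernel of a cone with vertex `0`, in polar coordinates. -/
noncomputable def conePV (n : ℕ) {D : Type*} (α : ℕ → ℝ) (m : ℕ → D → ℝ)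
    (t r ρ : ℝ) (θ ω : D) : ℝ :=
  (1 / t) * (r * ρ) ^ (-((n : ℝ) / 2 - 1)) * Real.exp (-(r ^ 2 + ρ ^ 2) / (2 * t)) *
    ∑' i : ℕ, besselI (α i) (r * ρ / t) * m i θ * m i ω

/-!
The power series of `I_ν` gives `(z/2)^ν / Γ(ν+1) ≤ I_ν(z) ≤ e^{(z/2)²} (z/2)^ν / Γ(ν+1)` for
`ν ≥ 0`, so `I_ν(z) ~ (z/2)^ν / Γ(ν+1)` as `z → 0⁺`. After dividing the eigenfunction series by
`(z/2)^{α₀}`, the `i`-th term carries the extra factor `(z/2)^{α_i - α₀}`, which tends to `0` for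
`i ≥ 1` because `α₀ < α₁ ≤ α_i`; for `z ≤ 1` the series is dominated by a multiple of the summable
`1 / (2^{α_i} Γ(α_i + 1))`, so only the term `i = 0` survives in the limit. With `z = rρ/t` this
gives `t^{α₀+1} p^V(t,x,y) → v(x) v(y) / (2^{α₀} Γ(α₀+1))`, and the ratio of two such limits is
the claim.
-/

open Real Set Topology
open scoped Nat

lemma Real.Gamma_add_one_le_Gamma_add_nat_add_one {ν : ℝ} (hν : 0 ≤ ν) (k : ℕ) :
    Gamma (ν + 1) ≤ Gamma (ν + k + 1) := by
  induction k with
  | zero => simp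
  | succ k ih =>
    have hpos : 0 < ν + k + 1 := by positivity
    calc Gamma (ν + 1) ≤ Gamma (ν + k + 1) := ih
      _ ≤ (ν + k + 1) * Gamma (ν + k + 1) :=
        le_mul_of_one_le_left (Gamma_pos_of_pos hpos).le (by linarith)
      _ = Gamma (ν + (k + 1 : ℕ) + 1) := by
        rw [← Gamma_add_one hpos.ne']; push_cast; ring_nf

lemma besselI_div_rpow_eq_tsum (ν : ℝ) {z : ℝ} (hz : 0 < z) :
    besselI ν z / (z / 2) ^ ν = ∑' k : ℕ, ((z / 2) ^ 2) ^ k / (k ! * Gamma (ν + k + 1)) := by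
  have hz2 : 0 < z / 2 := by positivity
  rw [besselI, ← tsum_div_const]
  refine tsum_congr fun k => ?_
  rw [rpow_add hz2, show (2 * k : ℝ) = (2 * k : ℕ) by push_cast; ring, rpow_natCast, pow_mul]
  field_simp

lemma tsum_pow_div_factorial_mul_Gamma_mem_Icc {ν q : ℝ} (hν : 0 ≤ ν) (hq : 0 ≤ q) :
    ∑' k : ℕ, q ^ k / (k ! * Gamma (ν + k + 1)) ∈
      Icc (Gamma (ν + 1))⁻¹ (exp q * (Gamma (ν + 1))⁻¹) := by
  have hterm_nonneg (k : ℕ) : 0 ≤ q ^ k / (k ! * Gamma (ν + k + 1)) := by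
    have := Gamma_pos_of_pos (show 0 < ν + k + 1 by positivity)
    positivity
  have hterm_le (k : ℕ) :
      q ^ k / (k ! * Gamma (ν + k + 1)) ≤ q ^ k / k ! * (Gamma (ν + 1))⁻¹ := by
    rw [← div_eq_mul_inv, div_div]
    gcongr
    exact Gamma_add_one_le_Gamma_add_nat_add_one hν k
  have hexp : HasSum (fun k : ℕ => q ^ k / k ! * (Gamma (ν + 1))⁻¹)
      (exp q * (Gamma (ν + 1))⁻¹) := by
    rw [exp_eq_exp_ℝ]
    exact (NormedSpace.expSeries_div_hasSum_exp q).mul_right _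
  have hsum : Summable fun k : ℕ => q ^ k / (k ! * Gamma (ν + k + 1)) :=
    .of_nonneg_of_le hterm_nonneg hterm_le hexp.summable
  constructor
  · simpa using hsum.le_tsum 0 fun k _ => hterm_nonneg k
  · exact hasSum_le hterm_le hsum.hasSum hexp

lemma besselI_div_rpow_mem_Icc {ν z : ℝ} (hν : 0 ≤ ν) (hz : 0 < z) :
    besselI ν z / (z / 2) ^ ν ∈
      Icc (Gamma (ν + 1))⁻¹ (exp ((z / 2) ^ 2) * (Gamma (ν + 1))⁻¹) :=
  besselI_div_rpow_eq_tsum ν hz ▸ tsum_pow_div_factorial_mul_Gamma_mem_Icc hν (by positivity)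

lemma tendsto_besselI_div_rpow {ν : ℝ} (hν : 0 ≤ ν) :
    Tendsto (fun z => besselI ν z / (z / 2) ^ ν) (𝓝[>] 0) (𝓝 (Gamma (ν + 1))⁻¹) := by
  have hupper : Tendsto (fun z : ℝ => exp ((z / 2) ^ 2) * (Gamma (ν + 1))⁻¹) (𝓝[>] 0)
      (𝓝 (Gamma (ν + 1))⁻¹) := by
    have : Continuous fun z : ℝ => exp ((z / 2) ^ 2) * (Gamma (ν + 1))⁻¹ := by fun_prop
    simpa using (this.tendsto 0).mono_left nhdsWithin_le_nhds
  have hbounds : ∀ᶠ z in 𝓝[>] (0 : ℝ), besselI ν z / (z / 2) ^ ν ∈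
      Icc (Gamma (ν + 1))⁻¹ (exp ((z / 2) ^ 2) * (Gamma (ν + 1))⁻¹) :=
    eventually_nhdsWithin_of_forall fun z hz => besselI_div_rpow_mem_Icc hν hz
  exact tendsto_of_tendsto_of_tendsto_of_le_of_le' tendsto_const_nhds hupper
    (hbounds.mono fun _ h => h.1) (hbounds.mono fun _ h => h.2)

lemma tendsto_tsum_besselI_mul_div_rpow {α c : ℕ → ℝ} {C : ℝ} (hα0 : 0 ≤ α 0)
    (hα : ∀ i ≠ 0, α 0 < α i) (hsum : Summable fun i => ((2 : ℝ) ^ α i * Gamma (α i + 1))⁻¹)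
    (hc : ∀ i, |c i| ≤ C) :
    Tendsto (fun z => (∑' i, besselI (α i) z * c i) / (z / 2) ^ α 0) (𝓝[>] 0)
      (𝓝 (c 0 / Gamma (α 0 + 1))) := by
  have hαle (i : ℕ) : α 0 ≤ α i := by
    rcases eq_or_ne i 0 with rfl | hi
    exacts [le_rfl, (hα i hi).le]
  set f : ℝ → ℕ → ℝ := fun z i =>
    besselI (α i) z / (z / 2) ^ α i * (z / 2) ^ (α i - α 0) * c i with hf
  have hf_eq : ∀ᶠ z in 𝓝[>] (0 : ℝ),
      ∑' i, f z i = (∑' i, besselI (α i) z * c i) / (z / 2) ^ α 0 := by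
    filter_upwards [self_mem_nhdsWithin] with z hz
    have hz2 : 0 < z / 2 := by simpa using hz
    rw [← tsum_div_const]
    refine tsum_congr fun i => ?_
    simp only [hf, rpow_sub hz2]
    have := (rpow_pos_of_pos hz2 (α i)).ne'
    have := (rpow_pos_of_pos hz2 (α 0)).ne'
    field_simp
  have hf_lim (i : ℕ) : Tendsto (f · i) (𝓝[>] 0)
      (𝓝 ((Gamma (α i + 1))⁻¹ * (0 / 2 : ℝ) ^ (α i - α 0) * c i)) := by
    refine ((tendsto_besselI_div_rpow (hα0.trans (hαle i))).mul ?_).mul_const _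
    exact ((continuousAt_rpow_const _ _ (Or.inr (sub_nonneg.2 (hαle i)))).comp
      (continuous_id.div_const 2).continuousAt).tendsto.mono_left nhdsWithin_le_nhds
  have hf_le : ∀ z ∈ Ioc (0 : ℝ) 1, ∀ i,
      ‖f z i‖ ≤ exp 1 * 2 ^ α 0 * C * ((2 : ℝ) ^ α i * Gamma (α i + 1))⁻¹ := by
    intro z ⟨hz0, hz1⟩ i
    obtain ⟨hlo, hhi⟩ := besselI_div_rpow_mem_Icc (hα0.trans (hαle i)) hz0
    have hΓ : 0 < Gamma (α i + 1) := Gamma_pos_of_pos (by linarith [hα0.trans (hαle i)])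
    have hI_nonneg : 0 ≤ besselI (α i) z / (z / 2) ^ α i := (inv_nonneg.2 hΓ.le).trans hlo
    have hexp : exp ((z / 2) ^ 2) ≤ exp 1 := exp_le_exp.2 (by nlinarith)
    have hpow : (z / 2) ^ (α i - α 0) ≤ 2 ^ α 0 * ((2 : ℝ) ^ α i)⁻¹ := calc
      (z / 2) ^ (α i - α 0) ≤ (2⁻¹ : ℝ) ^ (α i - α 0) :=
        rpow_le_rpow (by positivity) (by linarith) (sub_nonneg.2 (hαle i))
      _ = 2 ^ α 0 * ((2 : ℝ) ^ α i)⁻¹ := by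
        rw [inv_rpow zero_le_two, rpow_sub zero_lt_two, inv_div, div_eq_mul_inv]
    rw [hf, Real.norm_eq_abs, abs_mul, abs_mul, abs_of_nonneg hI_nonneg,
      abs_of_nonneg (rpow_nonneg (by positivity) _)]
    calc besselI (α i) z / (z / 2) ^ α i * (z / 2) ^ (α i - α 0) * |c i|
        ≤ exp 1 * (Gamma (α i + 1))⁻¹ * (2 ^ α 0 * ((2 : ℝ) ^ α i)⁻¹) * C := by
          gcongr
          exacts [hhi.trans (by gcongr), hc i]
      _ = exp 1 * 2 ^ α 0 * C * ((2 : ℝ) ^ α i * Gamma (α i + 1))⁻¹ := by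
        rw [mul_inv]; ring
  have hlim_sum : ∑' i, (Gamma (α i + 1))⁻¹ * (0 / 2 : ℝ) ^ (α i - α 0) * c i =
      c 0 / Gamma (α 0 + 1) := by
    rw [tsum_eq_single 0 fun i hi => by rw [zero_div, zero_rpow (sub_pos.2 (hα i hi)).ne']; ring,
      sub_self, rpow_zero]
    ring
  rw [← hlim_sum]
  refine (tendsto_tsum_of_dominated_convergence (hsum.mul_left (exp 1 * 2 ^ α 0 * C)) hf_lim
    ?_).congr' hf_eq
  filter_upwards [Ioc_mem_nhdsGT zero_lt_one] with z hz using hf_le z hz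

noncomputable def coneMinimalHarmonic (n : ℕ) {D : Type*} (α : ℕ → ℝ) (m : ℕ → D → ℝ) (r : ℝ)
    (θ : D) : ℝ :=
  r ^ (α 0 - ((n : ℝ) / 2 - 1)) * m 0 θ

lemma tendsto_rpow_mul_conePV {D : Type*} (n : ℕ) {α : ℕ → ℝ} {m : ℕ → D → ℝ} {C : ℝ}
    (hα0 : 0 ≤ α 0) (hα : ∀ i ≠ 0, α 0 < α i)
    (hsum : Summable fun i => ((2 : ℝ) ^ α i * Gamma (α i + 1))⁻¹) (hm : ∀ i θ, |m i θ| ≤ C)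
    {r ρ : ℝ} (hr : 0 < r) (hρ : 0 < ρ) (θ ω : D) :
    Tendsto (fun t => t ^ (α 0 + 1) * conePV n α m t r ρ θ ω) atTop
      (𝓝 (coneMinimalHarmonic n α m r θ * coneMinimalHarmonic n α m ρ ω /
        (2 ^ α 0 * Gamma (α 0 + 1)))) := by
  have hcoef (i : ℕ) : |m i θ * m i ω| ≤ C * C := by
    rw [abs_mul]
    exact mul_le_mul (hm i θ) (hm i ω) (abs_nonneg _) ((abs_nonneg _).trans (hm 0 θ))
  have hz : Tendsto (fun t => r * ρ / t) atTop (𝓝[>] 0) :=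
    tendsto_nhdsWithin_iff.2 ⟨tendsto_const_nhds.div_atTop tendsto_id,
      (eventually_gt_atTop 0).mono fun t ht => by simp only [mem_Ioi]; positivity⟩
  have hS := (tendsto_tsum_besselI_mul_div_rpow hα0 hα hsum hcoef).comp hz
  have hE : Tendsto (fun t : ℝ => exp (-(r ^ 2 + ρ ^ 2) / (2 * t))) atTop (𝓝 1) := by
    have : Tendsto (fun t : ℝ => -(r ^ 2 + ρ ^ 2) / 2 / t) atTop (𝓝 0) :=
      tendsto_const_nhds.div_atTop tendsto_id
    simpa only [Function.comp_def, div_div, exp_zero] using (continuous_exp.tendsto 0).comp this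
  have hlim := ((hE.const_mul ((r * ρ) ^ (-((n : ℝ) / 2 - 1)))).mul hS).mul_const
    ((r * ρ / 2) ^ α 0)
  have hfactor : ∀ t > (0 : ℝ), t ^ (α 0 + 1) * conePV n α m t r ρ θ ω =
      (r * ρ) ^ (-((n : ℝ) / 2 - 1)) * exp (-(r ^ 2 + ρ ^ 2) / (2 * t)) *
        ((∑' i, besselI (α i) (r * ρ / t) * (m i θ * m i ω)) / (r * ρ / t / 2) ^ α 0) *
        (r * ρ / 2) ^ α 0 := by
    intro t ht
    have hpow : (r * ρ / 2) ^ α 0 = t ^ α 0 * (r * ρ / t / 2) ^ α 0 := by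
      rw [← mul_rpow ht.le (by positivity)]; congr 1; field_simp
    have := (rpow_pos_of_pos (show 0 < r * ρ / t / 2 by positivity) (α 0)).ne'
    simp only [conePV, mul_assoc]
    rw [hpow, rpow_add_one ht.ne']
    field_simp
  convert hlim.congr' ((eventually_gt_atTop 0).mono fun t ht => (hfactor t ht).symm) using 2
  simp only [coneMinimalHarmonic]
  rw [div_rpow (by positivity) zero_le_two, mul_rpow hr.le hρ.le, mul_rpow hr.le hρ.le,
    rpow_sub hr, rpow_sub hρ, rpow_neg hr.le, rpow_neg hρ.le]
  field_simp

theorem cone_heat_kernel_ratio_limit_general {D : Type*} (n : ℕ)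
    (lam : ℕ → ℝ) (m : ℕ → D → ℝ) (α : ℕ → ℝ)
    (hα : ∀ i, α i = Real.sqrt (lam i + ((n : ℝ) / 2 - 1) ^ 2))
    (hlam0 : 0 < lam 0) (hlam01 : lam 0 < lam 1) (hlammono : Monotone lam)
    (hmbdd : ∃ Cm : ℝ, ∀ i θ, |m i θ| ≤ Cm)
    (hm0pos : ∀ θ : D, 0 < m 0 θ)
    (hsum : ∀ r ρ : ℝ, 0 < r → 0 < ρ →
      Summable (fun i : ℕ =>
        (r * ρ) ^ (α i - ((n : ℝ) / 2 - 1)) / (2 ^ (α i) * Real.Gamma (1 + α i))))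
    (r ρ r' ρ' : ℝ) (θ ω θ' ω' : D)
    (hr : 0 < r) (hρ : 0 < ρ) (hr' : 0 < r') (hρ' : 0 < ρ') :
    Tendsto (fun t : ℝ => conePV n α m t r ρ θ ω / conePV n α m t r' ρ' θ' ω') atTop
      (nhds ((r ^ (α 0 - ((n : ℝ) / 2 - 1)) * m 0 θ *
          (ρ ^ (α 0 - ((n : ℝ) / 2 - 1)) * m 0 ω)) /
        (r' ^ (α 0 - ((n : ℝ) / 2 - 1)) * m 0 θ' *
          (ρ' ^ (α 0 - ((n : ℝ) / 2 - 1)) * m 0 ω')))) := by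
  obtain ⟨Cm, hCm⟩ := hmbdd
  have hα0 : 0 ≤ α 0 := hα 0 ▸ sqrt_nonneg _
  have hα_lt (i : ℕ) (hi : i ≠ 0) : α 0 < α i := by
    rw [hα 0, hα i]
    exact sqrt_lt_sqrt (by positivity)
      (by linarith [hlammono (Nat.one_le_iff_ne_zero.2 hi)])
  have hK : Summable fun i => ((2 : ℝ) ^ α i * Gamma (α i + 1))⁻¹ := by
    simpa [add_comm] using hsum 1 1 one_pos one_pos
  have hv (s : ℝ) (η : D) (hs : 0 < s) : 0 < coneMinimalHarmonic n α m s η :=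
    mul_pos (rpow_pos_of_pos hs _) (hm0pos η)
  have hΓ : 0 < 2 ^ α 0 * Gamma (α 0 + 1) :=
    mul_pos (rpow_pos_of_pos two_pos _) (Gamma_pos_of_pos (by linarith))
  have hratio := (tendsto_rpow_mul_conePV n hα0 hα_lt hK hCm hr hρ θ ω).div
    (tendsto_rpow_mul_conePV n hα0 hα_lt hK hCm hr' hρ' θ' ω')
    (div_pos (mul_pos (hv r' θ' hr') (hv ρ' ω' hρ')) hΓ).ne'
  rw [div_div_div_cancel_right₀ hΓ.ne'] at hratio
  refine hratio.congr' ((eventually_gt_atTop 0).mono fun t ht => ?_)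
  exact mul_div_mul_left _ _ (rpow_pos_of_pos ht _).ne'

/-- for fixed `x = rθ`, `y = ρω`, `w = r'θ'`, `z = ρ'ω'` in the cone,
`p^V(t,x,y)/p^V(t,w,z) → v(x)v(y)/(v(w)v(z))` as `t → ∞`, where
`v(rθ) = r^{α¹-(n/2-1)} m¹(θ)` (with `m¹ = m 0 > 0` on `D`). -/
theorem cone_heat_kernel_ratio_limit {D : Type*} (n : ℕ) (hn : 1 ≤ n)
    (lam : ℕ → ℝ) (m : ℕ → D → ℝ) (α : ℕ → ℝ)
    (hα : ∀ i, α i = Real.sqrt (lam i + ((n : ℝ) / 2 - 1) ^ 2))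
    (hlam0 : 0 < lam 0) (hlam01 : lam 0 < lam 1) (hlammono : Monotone lam)
    (hmbdd : ∃ Cm : ℝ, ∀ i θ, |m i θ| ≤ Cm)
    (hm0pos : ∀ θ : D, 0 < m 0 θ)
    (hsum : ∀ r ρ : ℝ, 0 < r → 0 < ρ →
      Summable (fun i : ℕ =>
        (r * ρ) ^ (α i - ((n : ℝ) / 2 - 1)) / (2 ^ (α i) * Real.Gamma (1 + α i))))
    (hser : ∀ t r ρ : ℝ, 0 < t → 0 < r → 0 < ρ → ∀ θ ω : D,
      Summable (fun i : ℕ => besselI (α i) (r * ρ / t) * m i θ * m i ω))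
    (r ρ r' ρ' : ℝ) (θ ω θ' ω' : D)
    (hr : 0 < r) (hρ : 0 < ρ) (hr' : 0 < r') (hρ' : 0 < ρ') :
    Tendsto (fun t : ℝ => conePV n α m t r ρ θ ω / conePV n α m t r' ρ' θ' ω') atTop
      (nhds ((r ^ (α 0 - ((n : ℝ) / 2 - 1)) * m 0 θ *
          (ρ ^ (α 0 - ((n : ℝ) / 2 - 1)) * m 0 ω)) /
        (r' ^ (α 0 - ((n : ℝ) / 2 - 1)) * m 0 θ' *
          (ρ' ^ (α 0 - ((n : ℝ) / 2 - 1)) * m 0 ω')))) :=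
  cone_heat_kernel_ratio_limit_general n lam m α hα hlam0 hlam01 hlammono hmbdd hm0pos hsum r ρ r'
    ρ' θ ω θ' ω' hr hρ hr' hρ'
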